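/- Let A be a commutative ring, B a commutative A-algebra, and Ψ_n : B^{⊗(n+1)} → Ω^{(n)}_{B/A} the A-linear map with Ψ_n(y₀⊗⋯⊗yₙ) = y₀ dy₁ ∧̃ ⋯ ∧̃ dyₙ. Then Ψ_n annihilates I_{ij}² for every 0 ≤ i < j ≤ n, where I_{ij} is the kernel of the map merging tensor factors i and j. -/

import Mathlib

open scoped TensorProduct
open PiTensorProduct

variable (A B : Type) [CommRing A] [CommRing B] [Algebra A B]

abbrev Bpow (n : ℕ) : Type := ⨂[A] (_ : Fin n), B

noncomputable def rmap {m n : ℕ} (r : Fin m → Fin n) : Bpow A B m →ₐ[A] Bpow A B n :=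
  PiTensorProduct.liftAlgHom
    ((MultilinearMap.mkPiAlgebra A (Fin m) (Bpow A B n)).compLinearMap
      (fun k => (PiTensorProduct.singleAlgHom (R := A) (A := fun _ : Fin n => B) (r k)).toLinearMap))
    (by simp [← PiTensorProduct.one_def])
    (by intro x y
        simp only [MultilinearMap.compLinearMap_apply, MultilinearMap.mkPiAlgebra_apply,
          Pi.mul_apply, AlgHom.toLinearMap_apply, _root_.map_mul, Finset.prod_mul_distrib])

noncomputable def mergeN (n i j : ℕ) (hij : i < j) (hj : j ≤ n) :
    Bpow A B (n+1) →ₐ[A] Bpow A B n :=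
  rmap A B (fun k => if h1 : k.val < j then ⟨k.val, by omega⟩
    else if h2 : k.val = j then ⟨i, by omega⟩
    else ⟨k.val - 1, by have := k.isLt; omega⟩)

noncomputable def Iideal (n i j : ℕ) (hij : i < j) (hj : j ≤ n) : Ideal (Bpow A B (n+1)) :=
  RingHom.ker (mergeN A B n i j hij hj)

noncomputable def Kideal (n : ℕ) : Ideal (Bpow A B (n+1)) :=
  ⨆ (i : ℕ) (j : ℕ) (hij : i < j) (hj : j ≤ n), (Iideal A B n i j hij hj) ^ 2

abbrev Cq (n : ℕ) : Type := Bpow A B (n+1) ⧸ Kideal A B n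

noncomputable def Jt (n i j : ℕ) (hij : i < j) (hj : j ≤ n) : Ideal (Cq A B n) :=
  Ideal.map (Ideal.Quotient.mk (Kideal A B n)) (Iideal A B n i j hij hj)

noncomputable def dElt (n i j : ℕ) (hi : i ≤ n) (hj : j ≤ n) (y : B) : Bpow A B (n+1) :=
  PiTensorProduct.singleAlgHom (R := A) (A := fun _ : Fin (n+1) => B) ⟨j, by omega⟩ y
    - PiTensorProduct.singleAlgHom (R := A) (A := fun _ : Fin (n+1) => B) ⟨i, by omega⟩ y

noncomputable def insN (n j : ℕ) (hj : j ≤ n+1) : Bpow A B (n+1) →ₐ[A] Bpow A B (n+2) :=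
  rmap A B (fun k => if h : k.val < j then ⟨k.val, by omega⟩
    else ⟨k.val + 1, by have := k.isLt; omega⟩)

noncomputable def eN (n : ℕ) : Bpow A B (n+1) →ₗ[A] Bpow A B (n+2) :=
  ∑ j : Fin (n+2), ((-1 : ℤ) ^ (j : ℕ)) • (insN A B n j (by omega)).toLinearMap

noncomputable def smashG (m n N : ℕ) (h : N = m + n) (x : Bpow A B (m+1)) (y : Bpow A B (n+1)) :
    Bpow A B (N+1) :=
  rmap A B (fun k : Fin (m+1) => (⟨k.val, by have := k.isLt; omega⟩ : Fin (N+1))) x *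
  rmap A B (fun k : Fin (n+1) => (⟨m + k.val, by have := k.isLt; omega⟩ : Fin (N+1))) y

/-- The submodule of relations defining the `n`-th antisymmetric power:
generated by symmetric tensors `ω⊗τ + τ⊗ω` in adjacent slots. -/
noncomputable def symSub (n : ℕ) : Submodule B (⨂[B] (_ : Fin n), Ω[B⁄A]) :=
  Submodule.span B { x | ∃ (f : Fin n → Ω[B⁄A]) (i : Fin n) (hi : i.val + 1 < n)
      (ω τ : Ω[B⁄A]),
    x = PiTensorProduct.tprod B
          (Function.update (Function.update f i ω) ⟨i.val+1, hi⟩ τ)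
      + PiTensorProduct.tprod B
          (Function.update (Function.update f i τ) ⟨i.val+1, hi⟩ ω) }

/-- The `n`-th antisymmetric power `Ω^{(n)}_{B/A}` of the Kähler differentials. -/
abbrev ASym (n : ℕ) : Type := (⨂[B] (_ : Fin n), Ω[B⁄A]) ⧸ symSub A B n

/-!
The ideal `I_{ij}` is generated by the elements `d_y = y^{(j)} - y^{(i)}` (`y` placed in factor `j`,
resp. `i`): the endomorphism of `B^{⊗(n+1)}` that moves factor `j` onto factor `i` kills `I_{ij}`
and is the identity modulo the `d_y`. So it suffices to show `Ψ (t * d_y * d_{y'}) = 0` for pure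
tensors `t`. As a function `F u v` of the entries `u = t_i`, `v = t_j`, multiplication by `d_y`
becomes the mixed difference `F u (v y) - F (u y) v`. For `i = 0` we have `F u v = u • δ v` for a
derivation `δ`, and for `i ≥ 1` we have `F u v = β (du) (dv)` with `β` bilinear and
antisymmetric, because a transposition of two factors of `Ω^{(n)}` is a product of an odd number
of adjacent ones. In both cases the Leibniz rule makes the iterated mixed difference vanish.
-/

open scoped Pointwise

theorem PiTensorProduct.tprod_mul_singleAlgHom {ι R : Type*} {C : ι → Type*} [DecidableEq ι]
    [CommSemiring R] [∀ k, Semiring (C k)] [∀ k, Algebra R (C k)] (t : ∀ k, C k) (k : ι)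
    (y : C k) :
    tprod R t * singleAlgHom k y = tprod R (Function.update t k (t k * y)) := by
  rw [singleAlgHom_apply, tprod_mul_tprod, MonoidHom.mulSingle_apply, Pi.mulSingle,
    ← Function.update_eq_self k t, Function.update_idem, ← mul_one t, ← Function.update_mul]
  simp

theorem LinearMap.map_eq_zero_of_mem_ideal_span {R C M : Type*} [CommSemiring R]
    [CommSemiring C] [Algebra R C] [AddCommMonoid M] [Module R M] (Ψ : C →ₗ[R] M) {G S : Set C}
    (hG : Submodule.span R G = ⊤) (h : ∀ g ∈ G, ∀ s ∈ S, Ψ (g * s) = 0) :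
    ∀ z ∈ Ideal.span S, Ψ z = 0 := by
  have hmul (s : C) (hs : s ∈ S) (c : C) : Ψ (c * s) = 0 :=
    LinearMap.congr_fun (LinearMap.ext_on (f := Ψ ∘ₗ LinearMap.mulRight R s) (g := 0) hG
      fun g hg => h g hg s hs) c
  intro z hz
  obtain ⟨f, t, hts, -, rfl⟩ := Submodule.mem_span_iff_exists_finset_subset.1 hz
  rw [map_sum]
  exact Finset.sum_eq_zero fun s hs => hmul s (hts hs) (f s)

def MultilinearMap.toBilinOfNe {R ι M N : Type*} [CommSemiring R] [DecidableEq ι]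
    [AddCommMonoid M] [Module R M] [AddCommMonoid N] [Module R N]
    (Φ : MultilinearMap R (fun _ : ι => M) N) (f : ι → M) {p q : ι} (hpq : p ≠ q) :
    M →ₗ[R] M →ₗ[R] N :=
  LinearMap.mk₂ R (fun ω ω' => Φ (Function.update (Function.update f p ω) q ω'))
    (fun ω₁ ω₂ ω' => by simp only [Function.update_comm hpq _ ω' f, Φ.map_update_add])
    (fun c ω ω' => by simp only [Function.update_comm hpq _ ω' f, Φ.map_update_smul])
    (fun ω ω'₁ ω'₂ => Φ.map_update_add _ _ _ _)
    (fun c ω ω' => Φ.map_update_smul _ _ _ _)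

@[simp]
theorem MultilinearMap.toBilinOfNe_apply {R ι M N : Type*} [CommSemiring R] [DecidableEq ι]
    [AddCommMonoid M] [Module R M] [AddCommMonoid N] [Module R N]
    (Φ : MultilinearMap R (fun _ : ι => M) N) (f : ι → M) {p q : ι} (hpq : p ≠ q)
    (ω ω' : M) :
    Φ.toBilinOfNe f hpq ω ω' = Φ (Function.update (Function.update f p ω) q ω') :=
  rfl

section MixedDifference

variable {R B M : Type*} [CommRing R] [CommRing B] [Algebra R B] [AddCommGroup M]

/-- Reading `F u v` as a function of `u ⊗ v`, `mixedDiff F y` is `F` precomposed with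
multiplication by `1 ⊗ y - y ⊗ 1`. -/
def mixedDiff (F : B → B → M) (y : B) (u v : B) : M := F u (v * y) - F (u * y) v

variable [Module B M] [Module R M]

theorem mixedDiff_mixedDiff_smul_derivation (δ : Derivation R B M) (y y' : B) :
    mixedDiff (mixedDiff (fun u v => u • δ v) y) y' = 0 := by
  ext u v
  simp only [mixedDiff, Derivation.leibniz, Pi.zero_apply]
  module

theorem mixedDiff_mixedDiff_of_antisymm {N : Type*} [AddCommGroup N] [Module B N]
    (δ : Derivation R B M) (β : M →ₗ[B] M →ₗ[B] N) (hβ : ∀ ω ω', β ω ω' = -β ω' ω)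
    (y y' : B) :
    mixedDiff (mixedDiff (fun u v => β (δ u) (δ v)) y) y' = 0 := by
  ext u v
  simp only [mixedDiff, Derivation.leibniz, map_add, map_smul, LinearMap.add_apply,
    LinearMap.smul_apply, Pi.zero_apply]
  rw [hβ (δ y') (δ y)]
  module

end MixedDifference

section Generators

variable {A B}

theorem rmap_tprod {m n : ℕ} (r : Fin m → Fin n) (y : Fin m → B) :
    rmap A B r (tprod A y) = ∏ k, singleAlgHom (r k) (y k) :=
  lift.tprod _

theorem rmap_singleAlgHom {m n : ℕ} (r : Fin m → Fin n) (k : Fin m) (y : B) :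
    rmap A B r (singleAlgHom k y) = singleAlgHom (r k) y := by
  rw [singleAlgHom_apply, rmap_tprod,
    Finset.prod_eq_single k (fun l _ hl => by simp [hl, ← one_def]) (by simp)]
  simp

theorem Iideal_le_span_range_dElt {n i j : ℕ} (hij : i < j) (hj : j ≤ n) :
    Iideal A B n i j hij hj ≤ Ideal.span (Set.range (dElt A B n i j (by omega) hj)) := by
  set J := Ideal.span (Set.range (dElt A B n i j (by omega) hj))
  let skip : Fin n → Fin (n+1) := fun k => if k.val < j then ⟨k.val, by omega⟩
    else ⟨k.val + 1, by omega⟩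
  have hcollapse : (Ideal.Quotient.mkₐ A J).comp ((rmap A B skip).comp (mergeN A B n i j hij hj))
      = Ideal.Quotient.mkₐ A J := by
    refine algHom_ext fun k => AlgHom.ext fun b => ?_
    simp only [AlgHom.comp_apply, Ideal.Quotient.mkₐ_eq_mk, mergeN, rmap_singleAlgHom]
    by_cases hk : k.val = j
    · rw [Ideal.Quotient.eq, ← neg_mem_iff]
      obtain ⟨k, hk'⟩ := k
      subst hk
      refine Ideal.subset_span ⟨b, ?_⟩
      simp [skip, dElt, hij]
    · congr 3
      ext
      simp only [skip]
      split_ifs <;> simp_all <;> omega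
  intro x hx
  rw [← Ideal.Quotient.eq_zero_iff_mem, ← Ideal.Quotient.mkₐ_eq_mk A, ← hcollapse,
    AlgHom.comp_apply, AlgHom.comp_apply, hx, map_zero, map_zero]

end Generators

section Antisymmetry

variable {A B} {n : ℕ}

theorem ASym.mk_tprod_comp_swap_succ (f : Fin n → Ω[B⁄A]) (p : Fin n) (hp : p.val + 1 < n) :
    (Submodule.Quotient.mk (tprod B (f ∘ Equiv.swap p ⟨p.val + 1, hp⟩)) : ASym A B n)
      = -Submodule.Quotient.mk (tprod B f) := by
  rw [eq_neg_iff_add_eq_zero, ← Submodule.Quotient.mk_add, Submodule.Quotient.mk_eq_zero,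
    Equiv.swap_comm, Equiv.comp_swap_eq_update, add_comm]
  refine Submodule.subset_span ⟨f, p, hp, f p, f ⟨p.val + 1, hp⟩, ?_⟩
  simp

theorem ASym.mk_tprod_comp_swap_of_lt (f : Fin n → Ω[B⁄A]) {p q : Fin n} (hpq : p < q) :
    (Submodule.Quotient.mk (tprod B (f ∘ Equiv.swap p q)) : ASym A B n)
      = -Submodule.Quotient.mk (tprod B f) := by
  obtain ⟨d, hd⟩ : ∃ d, q.val = p.val + 1 + d := ⟨q.val - p.val - 1, by omega⟩
  induction d generalizing f p with
  | zero =>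
    rw [show q = ⟨p.val + 1, by omega⟩ from Fin.ext hd]
    exact mk_tprod_comp_swap_succ f p _
  | succ d ih =>
    set r : Fin n := ⟨p.val + 1, by omega⟩
    have hqr : q ≠ r := fun h => by simp [r, Fin.ext_iff] at h; omega
    rw [← Equiv.swap_mul_swap_mul_swap hqr hpq.ne', Equiv.Perm.coe_mul, Equiv.Perm.coe_mul,
      ← Function.comp_assoc, ← Function.comp_assoc, Equiv.swap_comm r p,
      mk_tprod_comp_swap_succ _ p, Equiv.swap_comm q r,
      ih _ (by simp [r, Fin.lt_def]; omega) (by simp [r]; omega), mk_tprod_comp_swap_succ, neg_neg]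

theorem ASym.mk_tprod_update_update_swap (f : Fin n → Ω[B⁄A]) {p q : Fin n} (hpq : p < q)
    (ω ω' : Ω[B⁄A]) :
    (Submodule.Quotient.mk (tprod B (Function.update (Function.update f p ω) q ω')) : ASym A B n)
      = -Submodule.Quotient.mk (tprod B (Function.update (Function.update f p ω') q ω)) := by
  rw [← mk_tprod_comp_swap_of_lt _ hpq]
  congr 2
  ext x
  grind

end Antisymmetry

section Vanishing

variable {A B}

theorem tprod_update_update_mul_dElt {n i j : ℕ} (hi : i ≤ n) (hj : j ≤ n) (hij : i ≠ j)
    (t : Fin (n+1) → B) (u v y : B) :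
    tprod A (Function.update (Function.update t ⟨i, by omega⟩ u) ⟨j, by omega⟩ v)
        * dElt A B n i j hi hj y
      = tprod A (Function.update (Function.update t ⟨i, by omega⟩ u) ⟨j, by omega⟩ (v * y))
        - tprod A
          (Function.update (Function.update t ⟨i, by omega⟩ (u * y)) ⟨j, by omega⟩ v) := by
  have hIJ : (⟨i, by omega⟩ : Fin (n+1)) ≠ ⟨j, by omega⟩ := by
    simpa [Fin.ext_iff] using hij
  rw [dElt, mul_sub, tprod_mul_singleAlgHom, tprod_mul_singleAlgHom, Function.update_self,
    Function.update_idem, Function.update_of_ne hIJ, Function.update_self,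
    Function.update_comm hIJ.symm, Function.update_idem]

theorem map_tprod_mul_dElt_mul_dElt {M : Type*} [AddCommGroup M] [Module A M]
    {n i j : ℕ} (hi : i ≤ n) (hj : j ≤ n) (hij : i ≠ j) (Φ : Bpow A B (n+1) →ₗ[A] M)
    (t : Fin (n+1) → B) (y y' : B) :
    Φ (tprod A t * dElt A B n i j hi hj y * dElt A B n i j hi hj y')
      = mixedDiff (mixedDiff (fun u v => Φ (tprod A
          (Function.update (Function.update t ⟨i, by omega⟩ u) ⟨j, by omega⟩ v))) y') y
          (t ⟨i, by omega⟩) (t ⟨j, by omega⟩) := by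
  have ht : tprod A t = tprod A (Function.update (Function.update t ⟨i, by omega⟩
      (t ⟨i, by omega⟩)) ⟨j, by omega⟩ (t ⟨j, by omega⟩)) := by simp
  simp only [ht, tprod_update_update_mul_dElt hi hj hij, sub_mul, map_sub, mixedDiff]

variable {n : ℕ} {Ψ : Bpow A B (n+1) →ₗ[A] ASym A B n}

theorem map_tprod_update_zero_update_succ
    (hΨ : ∀ y : Fin (n+1) → B, Ψ (tprod A y) = Submodule.Quotient.mk
      (y 0 • PiTensorProduct.tprod B (KaehlerDifferential.D A B ∘ Fin.tail y)))
    (t : Fin (n+1) → B) (q : Fin n) (u v : B) :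
    Ψ (tprod A (Function.update (Function.update t 0 u) q.succ v))
      = u • ((symSub A B n).mkQ ∘ₗ (PiTensorProduct.tprod B).toLinearMap
          (KaehlerDifferential.D A B ∘ Fin.tail t) q).compDer (KaehlerDifferential.D A B) v := by
  rw [hΨ, Function.update_of_ne (Fin.succ_ne_zero _).symm, Function.update_self,
    Fin.tail_update_succ, Fin.tail_update_zero, Function.comp_update]
  rfl

theorem map_tprod_update_succ_update_succ
    (hΨ : ∀ y : Fin (n+1) → B, Ψ (tprod A y) = Submodule.Quotient.mk
      (y 0 • PiTensorProduct.tprod B (KaehlerDifferential.D A B ∘ Fin.tail y)))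
    (t : Fin (n+1) → B) {p q : Fin n} (hpq : p ≠ q) (u v : B) :
    Ψ (tprod A (Function.update (Function.update t p.succ u) q.succ v))
      = (t 0 • ((symSub A B n).mkQ.compMultilinearMap (PiTensorProduct.tprod B)).toBilinOfNe
          (KaehlerDifferential.D A B ∘ Fin.tail t) hpq)
          (KaehlerDifferential.D A B u) (KaehlerDifferential.D A B v) := by
  rw [hΨ, Function.update_of_ne (Fin.succ_ne_zero _).symm,
    Function.update_of_ne (Fin.succ_ne_zero _).symm, Fin.tail_update_succ, Fin.tail_update_succ,
    Function.comp_update, Function.comp_update]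
  rfl

theorem map_tprod_mul_dElt_mul_dElt_eq_zero {i j : ℕ} (hij : i < j) (hj : j ≤ n)
    (hΨ : ∀ y : Fin (n+1) → B, Ψ (tprod A y) = Submodule.Quotient.mk
      (y 0 • PiTensorProduct.tprod B (KaehlerDifferential.D A B ∘ Fin.tail y)))
    (t : Fin (n+1) → B) (y y' : B) :
    Ψ (tprod A t * dElt A B n i j (by omega) hj y * dElt A B n i j (by omega) hj y') = 0 := by
  rw [map_tprod_mul_dElt_mul_dElt (by omega) hj hij.ne]
  obtain ⟨q, rfl⟩ : ∃ q, j = q + 1 := ⟨j - 1, by omega⟩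
  have hJ : (⟨q + 1, by omega⟩ : Fin (n+1)) = Fin.succ ⟨q, by omega⟩ := rfl
  cases i with
  | zero =>
    rw [hJ]
    simp only [Fin.zero_eta, map_tprod_update_zero_update_succ hΨ,
      mixedDiff_mixedDiff_smul_derivation, Pi.zero_apply]
  | succ p =>
    have hpq : (⟨p, by omega⟩ : Fin n) < ⟨q, by omega⟩ := by simpa [Fin.lt_def] using hij
    have hI : (⟨p + 1, by omega⟩ : Fin (n+1)) = Fin.succ ⟨p, by omega⟩ := rfl
    rw [hI, hJ]
    simp only [map_tprod_update_succ_update_succ hΨ t hpq.ne]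
    refine congrFun (congrFun (mixedDiff_mixedDiff_of_antisymm _ _ (fun ω ω' => ?_) y' y) _) _
    simp only [LinearMap.smul_apply, MultilinearMap.toBilinOfNe_apply,
      LinearMap.compMultilinearMap_apply, Submodule.mkQ_apply]
    rw [ASym.mk_tprod_update_update_swap _ hpq, smul_neg]

end Vanishing

/-- The canonical map `Ψₙ : B^{⊗(n+1)} → Ω^{(n)}_{B/A}` annihilates
`I_{ij}²` for every `0 ≤ i < j ≤ n`. -/
theorem statement10 (n i j : ℕ) (hij : i < j) (hj : j ≤ n)
    (Ψ : Bpow A B (n+1) →ₗ[A] ASym A B n)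
    (hΨ : ∀ y : Fin (n+1) → B,
      Ψ (PiTensorProduct.tprod A y) = Submodule.Quotient.mk
        (y 0 • PiTensorProduct.tprod B
          (fun i : Fin n => KaehlerDifferential.D A B (y i.succ)))) :
    ∀ z ∈ (Iideal A B n i j hij hj) ^ 2, Ψ z = 0 := by
  intro z hz
  have hz' : z ∈ Ideal.span
      (Set.range (dElt A B n i j (by omega) hj) * Set.range (dElt A B n i j (by omega) hj)) := by
    rw [← Ideal.span_mul_span', ← sq]
    exact Ideal.pow_right_mono (Iideal_le_span_range_dElt hij hj) 2 hz
  refine Ψ.map_eq_zero_of_mem_ideal_span span_tprod_eq_top ?_ z hz'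
  rintro _ ⟨t, rfl⟩ _ ⟨_, ⟨y, rfl⟩, _, ⟨y', rfl⟩, rfl⟩
  rw [← mul_assoc]
  exact map_tprod_mul_dElt_mul_dElt_eq_zero hij hj hΨ t y y'
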